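/- Let β, r, θ, c > 0 with β > r, c > 1/3, β c > β - 2r, and c < β²/(27 r²). Then the cubic f(u) = β c u³ - β u + 2r has exactly two zeros 0 < û₁ < û₂ < 1 in the interval (0,1), Ψ₂ attains a local maximum at û₁ and a local minimum at û₂, and if Ψ₂(û₂) < θ < Ψ₂(û₁) and θ < (β - r)(1 + c), then the equation Ψ₂(u) = θ has exactly three solutions in (0,1); consequently V₂ has exactly three positive fixed points. -/

import Mathlib

/-- The map `V₂(u,v) = (u(2-u) - u v, β u v + (1-r) v - θ u² v/(1 + c u²))`. -/
noncomputable def V2 (β r θ c : ℝ) (p : ℝ × ℝ) : ℝ × ℝ :=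
  (p.1 * (2 - p.1) - p.1 * p.2,
   β * p.1 * p.2 + (1 - r) * p.2 - θ * p.1 ^ 2 * p.2 / (1 + c * p.1 ^ 2))

/-- `Ψ₂(u) = (βu - r)(1 + cu²)/u²`. -/
noncomputable def Psi2 (β r c u : ℝ) : ℝ := (β * u - r) * (1 + c * u ^ 2) / u ^ 2

/-- The cubic `f(u) = βcu³ - βu + 2r`. -/
noncomputable def fcub (β r c u : ℝ) : ℝ := β * c * u ^ 3 - β * u + 2 * r

/-!
Since `Ψ₂'(u) = f(u)/u³`, the shape of `Ψ₂` on `(0, 1]` is the sign pattern of `f`. The cubic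
decreases up to its critical point `s = (3c)^(-1/2) < 1` and increases after it; `f(0) = 2r > 0`,
`f(1) = βc - β + 2r > 0`, and `f(s) = 2r - 2βs/3 < 0` is the condition `27r²c < β²`. So `f` has
exactly two zeros `û₁ < s < û₂` in `(0, 1)` and is `+, -, +` between them, i.e. `Ψ₂` rises, falls
and rises again. As `Ψ₂ < 0` near `0` and `Ψ₂(1) = (β - r)(1 + c)`, an admissible level `θ` is
taken exactly once on each of the three branches. A positive fixed point of `V₂` has `v = 1 - u`
and `Ψ₂(u) = θ`.
-/

open Set

section SignChanges

variable {f : ℝ → ℝ} {a b : ℝ}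

theorem exists_zero_of_strictAntiOn (hab : a ≤ b) (hf : ContinuousOn f (Icc a b))
    (hanti : StrictAntiOn f (Icc a b)) (ha : 0 < f a) (hb : f b < 0) :
    ∃ u ∈ Ioo a b, f u = 0 ∧ (∀ x ∈ Ico a u, 0 < f x) ∧ ∀ x ∈ Ioc u b, f x < 0 := by
  obtain ⟨u, hu, hfu⟩ := intermediate_value_Ioo' hab hf ⟨hb, ha⟩
  refine ⟨u, hu, hfu, fun x hx => ?_, fun x hx => ?_⟩
  · rw [← hfu]; exact hanti ⟨hx.1, hx.2.le.trans hu.2.le⟩ ⟨hu.1.le, hu.2.le⟩ hx.2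
  · rw [← hfu]; exact hanti ⟨hu.1.le, hu.2.le⟩ ⟨hu.1.le.trans hx.1.le, hx.2⟩ hx.1

theorem exists_two_zeros_of_strictAntiOn_of_strictMonoOn {s : ℝ} (has : a ≤ s) (hsb : s ≤ b)
    (hf : ContinuousOn f (Icc a b)) (hanti : StrictAntiOn f (Icc a s))
    (hmono : StrictMonoOn f (Icc s b)) (ha : 0 < f a) (hs : f s < 0) (hb : 0 < f b) :
    ∃ u₁ u₂, a < u₁ ∧ u₁ < s ∧ s < u₂ ∧ u₂ < b ∧ f u₁ = 0 ∧ f u₂ = 0 ∧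
      (∀ x ∈ Icc a b, f x = 0 → x = u₁ ∨ x = u₂) ∧
      (∀ x ∈ Ico a u₁, 0 < f x) ∧ (∀ x ∈ Ioo u₁ u₂, f x < 0) ∧ ∀ x ∈ Ioc u₂ b, 0 < f x := by
  obtain ⟨u₁, hu₁, hfu₁, hpos₁, hneg₁⟩ :=
    exists_zero_of_strictAntiOn has (hf.mono (Icc_subset_Icc_right hsb)) hanti ha hs
  obtain ⟨u₂, hu₂, hfu₂, hneg₂, hpos₂⟩ := exists_zero_of_strictAntiOn (f := -f) hsb
    (hf.mono (Icc_subset_Icc_left has)).neg hmono.neg (neg_pos.2 hs) (neg_lt_zero.2 hb)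
  have hneg : ∀ x ∈ Ioo u₁ u₂, f x < 0 := fun x hx => by
    rcases le_total x s with h | h
    · exact hneg₁ x ⟨hx.1, h⟩
    · exact neg_pos.1 (hneg₂ x ⟨h, hx.2⟩)
  have hpos₂' : ∀ x ∈ Ioc u₂ b, 0 < f x := fun x hx => neg_lt_zero.1 (hpos₂ x hx)
  refine ⟨u₁, u₂, hu₁.1, hu₁.2, hu₂.1, hu₂.2, hfu₁, neg_eq_zero.1 hfu₂, fun x hx hfx => ?_,
    hpos₁, hneg, hpos₂'⟩
  rcases lt_trichotomy x u₁ with h₁ | rfl | h₁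
  · exact absurd hfx (hpos₁ x ⟨hx.1, h₁⟩).ne'
  · exact Or.inl rfl
  rcases lt_trichotomy x u₂ with h₂ | rfl | h₂
  · exact absurd hfx (hneg x ⟨h₁, h₂⟩).ne
  · exact Or.inr rfl
  · exact absurd hfx (hpos₂' x ⟨h₂, hx.2⟩).ne'

end SignChanges

theorem ncard_level_eq_three_of_strictMonoOn_of_strictAntiOn {g : ℝ → ℝ} {a u₁ u₂ b x₀ θ : ℝ}
    (hg : ContinuousOn g (Ioc a b)) (h₁ : StrictMonoOn g (Ioc a u₁))
    (h₂ : StrictAntiOn g (Icc u₁ u₂)) (h₃ : StrictMonoOn g (Icc u₂ b))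
    (hx₀ : x₀ ∈ Ioo a u₁) (h₁₂ : u₁ < u₂) (h₂b : u₂ < b)
    (hθ₀ : g x₀ < θ) (hθ₁ : θ < g u₁) (hθ₂ : g u₂ < θ) (hθb : θ < g b) :
    {u | u ∈ Ioo a b ∧ g u = θ}.ncard = 3 := by
  have hau₁ : a < u₁ := hx₀.1.trans hx₀.2
  obtain ⟨w₁, hw₁, hgw₁⟩ := intermediate_value_Ioo hx₀.2.le
    (hg.mono (Icc_subset_Ioc hx₀.1 (h₁₂.trans h₂b).le)) ⟨hθ₀, hθ₁⟩
  obtain ⟨w₂, hw₂, hgw₂⟩ := intermediate_value_Ioo' h₁₂.le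
    (hg.mono (Icc_subset_Ioc hau₁ h₂b.le)) ⟨hθ₂, hθ₁⟩
  obtain ⟨w₃, hw₃, hgw₃⟩ := intermediate_value_Ioo h₂b.le
    (hg.mono (Icc_subset_Ioc (hau₁.trans h₁₂) le_rfl)) ⟨hθ₂, hθb⟩
  rw [ncard_eq_three]
  refine ⟨w₁, w₂, w₃, (hw₁.2.trans hw₂.1).ne, (hw₁.2.trans (h₁₂.trans hw₃.1)).ne,
    (hw₂.2.trans hw₃.1).ne, ?_⟩
  ext u
  simp only [mem_ofPred_eq, mem_insert_iff, mem_singleton_iff]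
  constructor
  · rintro ⟨hu, hgu⟩
    rcases le_or_gt u u₁ with hu₁ | hu₁
    · exact Or.inl (h₁.injOn ⟨hu.1, hu₁⟩ ⟨hx₀.1.trans hw₁.1, hw₁.2.le⟩ (hgu.trans hgw₁.symm))
    rcases le_or_gt u u₂ with hu₂ | hu₂
    · exact Or.inr (Or.inl
        (h₂.injOn ⟨hu₁.le, hu₂⟩ ⟨hw₂.1.le, hw₂.2.le⟩ (hgu.trans hgw₂.symm)))
    · exact Or.inr (Or.inr
        (h₃.injOn ⟨hu₂.le, hu.2.le⟩ ⟨hw₃.1.le, hw₃.2.le⟩ (hgu.trans hgw₃.symm)))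
  · rintro (rfl | rfl | rfl)
    · exact ⟨⟨hx₀.1.trans hw₁.1, hw₁.2.trans (h₁₂.trans h₂b)⟩, hgw₁⟩
    · exact ⟨⟨hau₁.trans hw₂.1, hw₂.2.trans h₂b⟩, hgw₂⟩
    · exact ⟨⟨hau₁.trans (h₁₂.trans hw₃.1), hw₃.2⟩, hgw₃⟩

section Cubic

variable {β r c : ℝ}

theorem hasDerivAt_fcub (u : ℝ) : HasDerivAt (fcub β r c) (β * (3 * c * u ^ 2 - 1)) u := by
  have h := (((hasDerivAt_pow 3 u).const_mul (β * c)).sub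
    ((hasDerivAt_id u).const_mul β)).add_const (2 * r)
  exact h.congr_deriv (by simp; ring)

theorem continuous_fcub : Continuous (fcub β r c) := by
  unfold fcub; fun_prop

variable {s : ℝ}

theorem strictAntiOn_fcub (hβ : 0 < β) (hs : 3 * c * s ^ 2 = 1) :
    StrictAntiOn (fcub β r c) (Icc 0 s) := by
  refine strictAntiOn_of_hasDerivWithinAt_neg (convex_Icc 0 s) continuous_fcub.continuousOn
    (fun x _ => (hasDerivAt_fcub x).hasDerivWithinAt) fun x hx => ?_
  rw [interior_Icc] at hx
  have : 3 * c * x ^ 2 < 1 := by nlinarith [hx.1, hx.2]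
  nlinarith

theorem strictMonoOn_fcub (hβ : 0 < β) (hs₀ : 0 ≤ s) (hs : 3 * c * s ^ 2 = 1) :
    StrictMonoOn (fcub β r c) (Ici s) := by
  refine strictMonoOn_of_hasDerivWithinAt_pos (convex_Ici s) continuous_fcub.continuousOn
    (fun x _ => (hasDerivAt_fcub x).hasDerivWithinAt) fun x hx => ?_
  rw [interior_Ici] at hx
  have : 1 < 3 * c * x ^ 2 := by nlinarith [mem_Ioi.1 hx]
  nlinarith

theorem fcub_neg_at_critical (hβ : 0 < β) (hs₀ : 0 < s) (hs : 3 * c * s ^ 2 = 1)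
    (hdisc : 27 * r ^ 2 * c < β ^ 2) : fcub β r c s < 0 := by
  have hval : fcub β r c s = 2 * r - 2 / 3 * (β * s) := by
    unfold fcub; linear_combination β * s / 3 * hs
  have h9 : (3 * r) ^ 2 < (β * s) ^ 2 := by
    nlinarith [mul_lt_mul_of_pos_right hdisc (pow_pos hs₀ 2)]
  have : 3 * r < β * s := lt_of_pow_lt_pow_left₀ 2 (by positivity) h9
  linarith

theorem exists_two_zeros_fcub (hβ : 0 < β) (hr : 0 < r) (hc : 1 / 3 < c)
    (hf₁ : β - 2 * r < β * c) (hdisc : 27 * r ^ 2 * c < β ^ 2) :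
    ∃ u₁ u₂, 0 < u₁ ∧ u₁ < u₂ ∧ u₂ < 1 ∧ fcub β r c u₁ = 0 ∧ fcub β r c u₂ = 0 ∧
      (∀ x ∈ Icc 0 1, fcub β r c x = 0 → x = u₁ ∨ x = u₂) ∧
      (∀ x ∈ Ico 0 u₁, 0 < fcub β r c x) ∧ (∀ x ∈ Ioo u₁ u₂, fcub β r c x < 0) ∧
      ∀ x ∈ Ioc u₂ 1, 0 < fcub β r c x := by
  obtain ⟨s, hs₀, hs⟩ : ∃ s : ℝ, 0 < s ∧ 3 * c * s ^ 2 = 1 :=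
    ⟨√(3 * c)⁻¹, by positivity, by rw [Real.sq_sqrt (by positivity)]; field_simp⟩
  have hs₁ : s < 1 := by
    by_contra! h
    nlinarith [one_le_pow₀ (n := 2) h]
  obtain ⟨u₁, u₂, hu₁₀, hu₁s, hsu₂, hu₂₁, rest⟩ :=
    exists_two_zeros_of_strictAntiOn_of_strictMonoOn hs₀.le hs₁.le continuous_fcub.continuousOn
      (strictAntiOn_fcub hβ hs) ((strictMonoOn_fcub hβ hs₀.le hs).mono Icc_subset_Ici_self)
      (by simpa [fcub]) (fcub_neg_at_critical hβ hs₀ hs hdisc) (by simp only [fcub]; linarith)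
  exact ⟨u₁, u₂, hu₁₀, hu₁s.trans hsu₂, hu₂₁, rest⟩

end Cubic

section Psi

variable {β r c : ℝ}

theorem hasDerivAt_Psi2 {u : ℝ} (hu : u ≠ 0) :
    HasDerivAt (Psi2 β r c) (fcub β r c u / u ^ 3) u := by
  have h := ((((hasDerivAt_id u).const_mul β).sub_const r).mul
    (((hasDerivAt_pow 2 u).const_mul c).const_add 1)).div (hasDerivAt_pow 2 u) (pow_ne_zero 2 hu)
  exact h.congr_deriv (by simp only [Pi.mul_apply, id]; unfold fcub; field_simp; ring)

theorem continuousOn_Psi2 {s : Set ℝ} (hs : (0 : ℝ) ∉ s) : ContinuousOn (Psi2 β r c) s :=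
  fun _ hx => (hasDerivAt_Psi2 (ne_of_mem_of_not_mem hx hs)).continuousAt.continuousWithinAt

theorem strictMonoOn_Psi2 {D : Set ℝ} (hD : Convex ℝ D) (hD₀ : D ⊆ Ioi 0)
    (hf : ∀ x ∈ interior D, 0 < fcub β r c x) : StrictMonoOn (Psi2 β r c) D :=
  strictMonoOn_of_hasDerivWithinAt_pos hD (continuousOn_Psi2 fun h => lt_irrefl (0 : ℝ) (hD₀ h))
    (fun _ hx => (hasDerivAt_Psi2 (hD₀ (interior_subset hx)).ne').hasDerivWithinAt)
    fun x hx => div_pos (hf x hx) (pow_pos (hD₀ (interior_subset hx)) 3)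

theorem strictAntiOn_Psi2 {D : Set ℝ} (hD : Convex ℝ D) (hD₀ : D ⊆ Ioi 0)
    (hf : ∀ x ∈ interior D, fcub β r c x < 0) : StrictAntiOn (Psi2 β r c) D :=
  strictAntiOn_of_hasDerivWithinAt_neg hD (continuousOn_Psi2 fun h => lt_irrefl (0 : ℝ) (hD₀ h))
    (fun _ hx => (hasDerivAt_Psi2 (hD₀ (interior_subset hx)).ne').hasDerivWithinAt)
    fun x hx => div_neg_of_neg_of_pos (hf x hx) (pow_pos (hD₀ (interior_subset hx)) 3)

theorem Psi2_one : Psi2 β r c 1 = (β - r) * (1 + c) := by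
  simp [Psi2]

theorem exists_mem_Ioo_Psi2_neg (hβ : 0 < β) (hr : 0 < r) (hc : 0 ≤ c) {t : ℝ} (ht : 0 < t) :
    ∃ x ∈ Ioo 0 t, Psi2 β r c x < 0 := by
  set x := r * t / (r + β * t)
  have hx₀ : 0 < x := by positivity
  have hxt : x < t := by rw [div_lt_iff₀ (by positivity)]; nlinarith [mul_pos hβ ht]
  have hβx : β * x < r := by
    rw [mul_div_assoc', div_lt_iff₀ (by positivity)]; nlinarith [mul_pos hr (mul_pos hβ ht)]
  exact ⟨x, ⟨hx₀, hxt⟩, div_neg_of_neg_of_pos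
    (mul_neg_of_neg_of_pos (by linarith) (by positivity)) (by positivity)⟩

end Psi

section FixedPoints

variable {β r θ c : ℝ}

theorem V2_eq_self_iff (hc : 0 ≤ c) {u v : ℝ} (hu : u ≠ 0) (hv : v ≠ 0) :
    V2 β r θ c (u, v) = (u, v) ↔ v = 1 - u ∧ Psi2 β r c u = θ := by
  have hq : 0 < 1 + c * u ^ 2 := by positivity
  have h₁ : u * (2 - u) - u * v = u ↔ v = 1 - u := by
    rw [← sub_eq_zero, show u * (2 - u) - u * v - u = u * (1 - u - v) by ring,
      mul_eq_zero, or_iff_right hu]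
    constructor <;> intro h <;> linarith
  have h₂ : β * u * v + (1 - r) * v - θ * u ^ 2 * v / (1 + c * u ^ 2) = v ↔
      Psi2 β r c u = θ := by
    rw [← sub_eq_zero, Psi2, div_eq_iff (pow_ne_zero 2 hu), ← sub_eq_zero (b := θ * u ^ 2),
      show β * u * v + (1 - r) * v - θ * u ^ 2 * v / (1 + c * u ^ 2) - v =
        v * ((β * u - r) * (1 + c * u ^ 2) - θ * u ^ 2) / (1 + c * u ^ 2) by
        field_simp; ring,
      div_eq_zero_iff, mul_eq_zero, or_iff_right hv, or_iff_left hq.ne']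
  simp only [V2, Prod.mk.injEq, h₁, h₂]

theorem ncard_V2_fixedPoints (hc : 0 ≤ c) :
    {p : ℝ × ℝ | 0 < p.1 ∧ 0 < p.2 ∧ V2 β r θ c p = p}.ncard =
      {u | u ∈ Ioo 0 1 ∧ Psi2 β r c u = θ}.ncard := by
  have himage : {p : ℝ × ℝ | 0 < p.1 ∧ 0 < p.2 ∧ V2 β r θ c p = p} =
      (fun u => (u, 1 - u)) '' {u | u ∈ Ioo 0 1 ∧ Psi2 β r c u = θ} := by
    ext ⟨u, v⟩
    simp only [mem_ofPred_eq, mem_image, mem_Ioo, Prod.mk.injEq]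
    constructor
    · rintro ⟨hu, hv, h⟩
      obtain ⟨rfl, hΨ⟩ := (V2_eq_self_iff hc hu.ne' hv.ne').1 h
      exact ⟨u, ⟨⟨hu, by linarith⟩, hΨ⟩, rfl, rfl⟩
    · rintro ⟨u, ⟨⟨hu₀, hu₁⟩, hΨ⟩, rfl, rfl⟩
      exact ⟨hu₀, by linarith, (V2_eq_self_iff hc hu₀.ne' (by linarith)).2 ⟨rfl, hΨ⟩⟩
  rw [himage, ncard_image_of_injective _ fun a b h => congrArg Prod.fst h]

end FixedPoints

theorem three_positive_fixed_points_V2_general (β r θ c : ℝ) (hβ : 0 < β) (hr : 0 < r)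
    (hθ : 0 < θ) (hc3 : 1 / 3 < c)
    (hf1 : β - 2 * r < β * c) (hc2 : c < β ^ 2 / (27 * r ^ 2)) :
    ∃ u1 u2 : ℝ, 0 < u1 ∧ u1 < u2 ∧ u2 < 1 ∧
      fcub β r c u1 = 0 ∧ fcub β r c u2 = 0 ∧
      (∀ u ∈ Set.Ioo (0 : ℝ) 1, fcub β r c u = 0 → u = u1 ∨ u = u2) ∧
      IsLocalMax (Psi2 β r c) u1 ∧ IsLocalMin (Psi2 β r c) u2 ∧
      (Psi2 β r c u2 < θ → θ < Psi2 β r c u1 → θ < (β - r) * (1 + c) →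
        {u : ℝ | u ∈ Set.Ioo (0 : ℝ) 1 ∧ Psi2 β r c u = θ}.ncard = 3 ∧
        {p : ℝ × ℝ | 0 < p.1 ∧ 0 < p.2 ∧ V2 β r θ c p = p}.ncard = 3) := by
  have hc : 0 < c := by linarith
  obtain ⟨u₁, u₂, hu₁₀, hu₁₂, hu₂₁, hfu₁, hfu₂, hzeros, hpos₁, hneg, hpos₂⟩ :=
    exists_two_zeros_fcub hβ hr hc3 hf1 (by rwa [lt_div_iff₀ (by positivity), mul_comm] at hc2)
  have h₁ : StrictMonoOn (Psi2 β r c) (Ioc 0 u₁) := strictMonoOn_Psi2 (convex_Ioc 0 u₁)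
    (fun x hx => hx.1) (by rw [interior_Ioc]; exact fun x hx => hpos₁ x (Ioo_subset_Ico_self hx))
  have h₂ : StrictAntiOn (Psi2 β r c) (Icc u₁ u₂) := strictAntiOn_Psi2 (convex_Icc u₁ u₂)
    (fun x hx => hu₁₀.trans_le hx.1) (by rw [interior_Icc]; exact hneg)
  have h₃ : StrictMonoOn (Psi2 β r c) (Icc u₂ 1) := strictMonoOn_Psi2 (convex_Icc u₂ 1)
    (fun x hx => (hu₁₀.trans hu₁₂).trans_le hx.1)
    (by rw [interior_Icc]; exact fun x hx => hpos₂ x (Ioo_subset_Ioc_self hx))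
  refine ⟨u₁, u₂, hu₁₀, hu₁₂, hu₂₁, hfu₁, hfu₂, fun u hu => hzeros u (Ioo_subset_Icc_self hu),
    isLocalMax_of_mono_anti hu₁₀ hu₁₂ h₁.monotoneOn (h₂.antitoneOn.mono Ico_subset_Icc_self),
    isLocalMin_of_anti_mono hu₁₂ hu₂₁ (h₂.antitoneOn.mono Ioc_subset_Icc_self)
      (h₃.monotoneOn.mono Ico_subset_Icc_self), fun hθ₂ hθ₁ hθb => ?_⟩
  obtain ⟨x₀, hx₀, hΨx₀⟩ := exists_mem_Ioo_Psi2_neg hβ hr hc.le hu₁₀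
  have hcard := ncard_level_eq_three_of_strictMonoOn_of_strictAntiOn
    (continuousOn_Psi2 (lt_irrefl 0 ·.1)) h₁ h₂ h₃ hx₀ hu₁₂ hu₂₁ (hΨx₀.trans hθ) hθ₁ hθ₂
    (Psi2_one.symm ▸ hθb)
  exact ⟨hcard, (ncard_V2_fixedPoints hc.le).trans hcard⟩

/-- If `β > r`, `c > 1/3`, `βc > β - 2r` and `c < β²/(27r²)`, then `f` has exactly
two zeros `0 < û₁ < û₂ < 1` in `(0,1)`, `Ψ₂` has a local maximum at `û₁` and a local
minimum at `û₂`, and if `Ψ₂(û₂) < θ < Ψ₂(û₁)` and `θ < (β-r)(1+c)` then `Ψ₂(u) = θ`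
has exactly three solutions in `(0,1)`, i.e. `V₂` has exactly three positive fixed
points. -/
theorem three_positive_fixed_points_V2 (β r θ c : ℝ) (hβ : 0 < β) (hr : 0 < r)
    (hθ : 0 < θ) (hc : 0 < c) (hβr : r < β) (hc3 : 1 / 3 < c)
    (hf1 : β - 2 * r < β * c) (hc2 : c < β ^ 2 / (27 * r ^ 2)) :
    ∃ u1 u2 : ℝ, 0 < u1 ∧ u1 < u2 ∧ u2 < 1 ∧
      fcub β r c u1 = 0 ∧ fcub β r c u2 = 0 ∧
      (∀ u ∈ Set.Ioo (0 : ℝ) 1, fcub β r c u = 0 → u = u1 ∨ u = u2) ∧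
      IsLocalMax (Psi2 β r c) u1 ∧ IsLocalMin (Psi2 β r c) u2 ∧
      (Psi2 β r c u2 < θ → θ < Psi2 β r c u1 → θ < (β - r) * (1 + c) →
        {u : ℝ | u ∈ Set.Ioo (0 : ℝ) 1 ∧ Psi2 β r c u = θ}.ncard = 3 ∧
        {p : ℝ × ℝ | 0 < p.1 ∧ 0 < p.2 ∧ V2 β r θ c p = p}.ncard = 3) :=
  three_positive_fixed_points_V2_general β r θ c hβ hr hθ hc3 hf1 hc2
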